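/- arXiv:1701.06555 — 4 statements merged into one kernel-verified Lean document; each statement's English description precedes it below -/
import Mathlib

section
/- Key equations (equality case): in the interleaved Reed–Solomon decoding setup, for any positive integers s ≤ ℓ and any multi-index j ∈ ℕ^m with 1 ≤ |j| < s, one has the polynomial identity Λ^s·f^j = Σ_{i ⪯ j} [Λ^{s-|i|}·Ω^i]·[C(j,i)·R^{j-i}·G^{|i|}], where the sum ranges over all i ∈ ℕ^m with i ⪯ j. -/
/-!
Multiplying the definition of `Ω` through gives the key relation `Λ f_t = Ω_t G + Λ R_t`.
Since `|j| ≤ s`, the factor `Λ^s` absorbs `Λ^{|j|}`, so `Λ^s f^j = Λ^{s-|j|} ∏_t (Λ f_t)^{j_t}`;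
expanding each `(Ω_t G + Λ R_t)^{j_t}` by the binomial theorem and collecting the powers of `Λ`
gives the claimed sum over `i ⪯ j`.
-/

open Polynomial Finset

theorem Finset.prod_add_pow_eq_sum_Iic {ι R : Type*} [Fintype ι] [DecidableEq ι]
    [CommSemiring R] (x y : ι → R) (j : ι → ℕ) :
    ∏ t, (x t + y t) ^ j t =
      ∑ i ∈ Iic j, (∏ t, x t ^ i t) * (∏ t, y t ^ (j t - i t)) *
        ((∏ t, (j t).choose (i t) : ℕ) : R) := by
  simp only [add_pow, Nat.range_succ_eq_Iic]
  rw [prod_univ_sum]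
  exact sum_congr rfl fun i _ => by simp only [prod_mul_distrib, Nat.cast_prod]

theorem key_equation_equality_general (F : Type*) [Field F]
    (m : ℕ)
    (f : Fin m → Polynomial F)
    (Λ : Polynomial F)
    (G : Polynomial F)
    (R : Fin m → Polynomial F)
    (Ω : Fin m → Polynomial F) (hΩ : ∀ t, Ω t * G = Λ * (f t - R t))
    (s : ℕ)
    (j : Fin m → ℕ) (hjs : ∑ t, j t < s) :
    Λ ^ s * ∏ t, f t ^ j t =
      ∑ i ∈ Finset.Iic j,
        (Λ ^ (s - ∑ t, i t) * ∏ t, Ω t ^ i t) *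
          (((∏ t, (j t).choose (i t) : ℕ) : Polynomial F) *
            (∏ t, R t ^ (j t - i t)) * G ^ (∑ t, i t)) := by
  have hkey : ∀ t, Λ * f t = Ω t * G + Λ * R t := fun t => by linear_combination -hΩ t
  calc Λ ^ s * ∏ t, f t ^ j t
      = Λ ^ (s - ∑ t, j t) * ∏ t, (Λ * f t) ^ j t := by
        simp only [mul_pow, prod_mul_distrib, prod_pow_eq_pow_sum]
        rw [← mul_assoc, ← pow_add, Nat.sub_add_cancel hjs.le]
    _ = ∑ i ∈ Iic j, Λ ^ (s - ∑ t, j t) * ((∏ t, (Ω t * G) ^ i t) *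
          (∏ t, (Λ * R t) ^ (j t - i t)) * ((∏ t, (j t).choose (i t) : ℕ) : Polynomial F)) := by
        simp only [hkey, prod_add_pow_eq_sum_Iic, mul_sum]
    _ = _ := by
        refine sum_congr rfl fun i hi => ?_
        have hij : ∀ t, i t ≤ j t := mem_Iic.mp hi
        have hexp : s - ∑ t, j t + ∑ t, (j t - i t) = s - ∑ t, i t := by
          have := sum_le_sum fun t (_ : t ∈ univ) => hij t
          rw [sum_tsub_distrib _ fun t _ => hij t]
          omega
        simp only [mul_pow, prod_mul_distrib, prod_pow_eq_pow_sum, ← hexp, pow_add]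
        ring

/-- Theorem 1 (key equations, equality case) of the paper: in the interleaved
Reed–Solomon decoding setup, for positive integers `s ≤ ℓ` and any multi-index
`j ∈ ℕ^m` with `1 ≤ |j| < s`, one has
`Λ^s·f^j = ∑_{i ⪯ j} [Λ^{s-|i|}·Ω^i]·[C(j,i)·R^{j-i}·G^{|i|}]`. -/
theorem key_equation_equality (F : Type*) [Field F] [Fintype F]
    (n k m : ℕ) (hk : k < n) (hm : 1 ≤ m)
    (α : Fin n → F) (hα : Function.Injective α)
    (f : Fin m → Polynomial F) (hf : ∀ t, (f t).degree < (k : ℕ))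
    (e : Fin m → Fin n → F)
    (E : Finset (Fin n)) (hE : ∀ i, i ∈ E ↔ ∃ t, e t i ≠ 0)
    (Λ : Polynomial F) (hΛ : Λ = ∏ i ∈ E, (X - C (α i)))
    (G : Polynomial F) (hG : G = ∏ i : Fin n, (X - C (α i)))
    (R : Fin m → Polynomial F) (hRdeg : ∀ t, (R t).degree < (n : ℕ))
    (hR : ∀ t i, (R t).eval (α i) = (f t).eval (α i) + e t i)
    (Ω : Fin m → Polynomial F) (hΩ : ∀ t, Ω t * G = Λ * (f t - R t))
    (s ℓ : ℕ) (hs : 0 < s) (hsℓ : s ≤ ℓ)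
    (j : Fin m → ℕ) (hj1 : 1 ≤ ∑ t, j t) (hjs : ∑ t, j t < s) :
    Λ ^ s * ∏ t, f t ^ j t =
      ∑ i ∈ Finset.Iic j,
        (Λ ^ (s - ∑ t, i t) * ∏ t, Ω t ^ i t) *
          (((∏ t, (j t).choose (i t) : ℕ) : Polynomial F) *
            (∏ t, R t ^ (j t - i t)) * G ^ (∑ t, i t)) :=
  key_equation_equality_general F m f Λ G R Ω hΩ s j hjs
end

section
/- Existence of solutions to simultaneous Hermite–Padé approximations: let F be a finite field, I and J finite index sets, S_{i,j} ∈ F[x] and G_j ∈ F[x] with G_j ≠ 0 for all i ∈ I, j ∈ J, and degree bounds N_i, T_j ∈ ℕ with T_j ≤ deg G_j for all j. If Σ_{i∈I} N_i > 1 + Σ_{j∈J} (deg G_j - T_j), then the set of solutions—tuples ((λ_i)_{i∈I}, (ψ_j)_{j∈J}) of polynomials with Σ_{i∈I} λ_i·S_{i,j} ≡ ψ_j (mod G_j) for all j ∈ J, deg λ_i < N_i for all i ∈ I, and deg ψ_j < T_j for all j ∈ J—is an F-vector space of dimension at least 2; in particular there exist two F-linearly independent nonzero solutions. -/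
open Polynomial

/-! The tuples `λ` with `deg λ_i < N_i` form a space of dimension `∑ N_i`. Reducing
`∑_i λ_i S_{i,j}` modulo `G_j` leaves a remainder of degree `< deg G_j`; requiring its
coefficients of degree `T_j, …, deg G_j - 1` to vanish imposes `∑_j (deg G_j - T_j)` linear
conditions, and then the remainder itself is an admissible `ψ_j`. By rank–nullity the
tuples `λ` satisfying these conditions form a space of dimension at least `2`. -/

theorem LinearMap.exists_linearIndependent_mem_ker {K V W : Type*} [DivisionRing K]
    [AddCommGroup V] [Module K V] [AddCommGroup W] [Module K W]
    [FiniteDimensional K V] [FiniteDimensional K W] (f : V →ₗ[K] W) {n : ℕ}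
    (hn : Module.finrank K W + n ≤ Module.finrank K V) :
    ∃ v : Fin n → V, LinearIndependent K v ∧ ∀ k, f (v k) = 0 := by
  have h_rank_nullity := f.finrank_range_add_finrank_ker
  have h_range : Module.finrank K (LinearMap.range f) ≤ Module.finrank K W :=
    Submodule.finrank_le _
  obtain ⟨v, hv⟩ :=
    exists_linearIndependent_of_le_finrank (R := K) (M := LinearMap.ker f) (n := n) (by omega)
  exact ⟨fun k => v k, hv.map' _ (LinearMap.ker f).ker_subtype, fun k => (v k).2⟩

theorem EuclideanDomain.dvd_sub_mod {R : Type*} [EuclideanDomain R] (a b : R) :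
    b ∣ a - a % b :=
  ⟨a / b, by rw [mod_eq_sub_mul_div, sub_sub_cancel]⟩

namespace Polynomial

section Semiring

variable {R : Type*} [Semiring R]

noncomputable def coeffWindow (m n : ℕ) : R[X] →ₗ[R] (Fin (n - m) → R) :=
  LinearMap.pi fun k => lcoeff R (m + k)

theorem degree_lt_of_coeffWindow_eq_zero {p : R[X]} {m n : ℕ} (hp : p.degree < n)
    (h : coeffWindow m n p = 0) : p.degree < m := by
  rw [degree_lt_iff_coeff_zero] at hp ⊢
  intro k hmk
  by_cases hkn : k < n
  · have := congrFun h ⟨k - m, by omega⟩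
    rwa [coeffWindow, LinearMap.pi_apply, lcoeff_apply, Nat.add_sub_cancel' hmk] at this
  · exact hp k (not_lt.mp hkn)

instance (n : ℕ) : Module.Finite R (degreeLT R n) :=
  Module.Finite.equiv (degreeLTEquiv R n).symm

end Semiring

section Field

variable {F : Type*} [Field F]

theorem finrank_degreeLT (n : ℕ) : Module.finrank F (degreeLT F n) = n := by
  rw [(degreeLTEquiv F n).finrank_eq, Module.finrank_fin_fun]

/-- Over a field `p % q` is by definition `p %ₘ` the monic associate of `q`, hence linear in `p`. -/
noncomputable def modHom (q : F[X]) : F[X] →ₗ[F] F[X] :=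
  modByMonicHom (q * C q.leadingCoeff⁻¹)

theorem modHom_apply (q p : F[X]) : modHom q p = p % q :=
  rfl

end Field

end Polynomial

section HermitePade

variable {F I J : Type*} [Field F] [Fintype I]

def IsHermitePadeSolution (S : I → J → F[X]) (G : J → F[X]) (N : I → ℕ) (T : J → ℕ)
    (sol : (I → F[X]) × (J → F[X])) : Prop :=
  (∀ j, G j ∣ ∑ i, sol.1 i * S i j - sol.2 j) ∧
    (∀ i, (sol.1 i).degree < (N i : ℕ)) ∧ ∀ j, (sol.2 j).degree < (T j : ℕ)

noncomputable def hermitePadeRemainder (S : I → J → F[X]) (G : J → F[X]) : (I → F[X]) →ₗ[F] (J → F[X]) :=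
  LinearMap.pi fun j =>
    (modHom (G j)).comp (∑ i, (LinearMap.mulRight F (S i j)).comp (LinearMap.proj i))

theorem hermitePadeRemainder_apply (S : I → J → F[X]) (G : J → F[X]) (lam : I → F[X]) (j : J) :
    hermitePadeRemainder S G lam j = (∑ i, lam i * S i j) % G j := by
  simp [hermitePadeRemainder, modHom_apply, -map_sum]

noncomputable def hermitePadeObstruction (S : I → J → F[X]) (G : J → F[X]) (T : J → ℕ) :
    (I → F[X]) →ₗ[F] (∀ j, Fin ((G j).natDegree - T j) → F) :=
  LinearMap.pi fun j =>
    (coeffWindow (T j) (G j).natDegree).comp ((LinearMap.proj j).comp (hermitePadeRemainder S G))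

theorem degree_hermitePadeRemainder_lt {S : I → J → F[X]} {G : J → F[X]} (hG : ∀ j, G j ≠ 0)
    {T : J → ℕ} {lam : I → F[X]} (h : hermitePadeObstruction S G T lam = 0) (j : J) :
    (hermitePadeRemainder S G lam j).degree < (T j : ℕ) := by
  refine degree_lt_of_coeffWindow_eq_zero ?_ (congrFun h j)
  rw [hermitePadeRemainder_apply]
  exact (degree_mod_lt _ (hG j)).trans_le degree_le_natDegree

theorem isHermitePadeSolution_hermitePadeRemainder {S : I → J → F[X]} {G : J → F[X]}
    (hG : ∀ j, G j ≠ 0) {N : I → ℕ} {T : J → ℕ} {lam : I → F[X]}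
    (hlam : ∀ i, (lam i).degree < (N i : ℕ)) (h : hermitePadeObstruction S G T lam = 0) :
    IsHermitePadeSolution S G N T (lam, hermitePadeRemainder S G lam) := by
  refine ⟨fun j => ?_, hlam, degree_hermitePadeRemainder_lt hG h⟩
  change G j ∣ ∑ i, lam i * S i j - hermitePadeRemainder S G lam j
  rw [hermitePadeRemainder_apply]
  exact EuclideanDomain.dvd_sub_mod _ _

theorem exists_linearIndependent_isHermitePadeSolution [Fintype J] (S : I → J → F[X])
    {G : J → F[X]} (hG : ∀ j, G j ≠ 0) (N : I → ℕ) (T : J → ℕ) {n : ℕ}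
    (hn : ∑ j, ((G j).natDegree - T j) + n ≤ ∑ i, N i) :
    ∃ sol : Fin n → (I → F[X]) × (J → F[X]),
      LinearIndependent F sol ∧ ∀ k, IsHermitePadeSolution S G N T (sol k) := by
  let incl : (∀ i, degreeLT F (N i)) →ₗ[F] (I → F[X]) :=
    LinearMap.piMap fun i => (degreeLT F (N i)).subtype
  have incl_injective : Function.Injective incl :=
    fun a b hab => funext fun i => Subtype.ext (congrFun hab i)
  have finrank_domain : Module.finrank F (∀ i, degreeLT F (N i)) = ∑ i, N i := by
    simp only [Module.finrank_pi_fintype, finrank_degreeLT]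
  have finrank_codomain :
      Module.finrank F (∀ j, Fin ((G j).natDegree - T j) → F) = ∑ j, ((G j).natDegree - T j) := by
    simp [Module.finrank_pi_fintype]
  obtain ⟨v, hv, hker⟩ := ((hermitePadeObstruction S G T).comp incl).exists_linearIndependent_mem_ker
    (n := n) (by rw [finrank_domain, finrank_codomain]; exact hn)
  refine ⟨fun k => (incl (v k), hermitePadeRemainder S G (incl (v k))), ?_, fun k => ?_⟩
  · exact LinearIndependent.of_comp (LinearMap.fst F _ _)
      (hv.map' incl (LinearMap.ker_eq_bot.mpr incl_injective))
  · exact isHermitePadeSolution_hermitePadeRemainder hG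
      (fun i => mem_degreeLT.mp (v k i).2) (hker k)

end HermitePade

theorem hermite_pade_two_independent_solutions_general (F : Type*) [Field F]
    (I J : Type*) [Fintype I] [Fintype J]
    (S : I → J → Polynomial F) (G : J → Polynomial F) (hG : ∀ j, G j ≠ 0)
    (N : I → ℕ) (T : J → ℕ)
    (hdim : ∑ i, N i > 1 + ∑ j, ((G j).natDegree - T j)) :
    ∃ (lam₁ : I → Polynomial F) (psi₁ : J → Polynomial F)
      (lam₂ : I → Polynomial F) (psi₂ : J → Polynomial F),
      (∀ j, G j ∣ (∑ i, lam₁ i * S i j - psi₁ j)) ∧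
      (∀ i, (lam₁ i).degree < (N i : ℕ)) ∧
      (∀ j, (psi₁ j).degree < (T j : ℕ)) ∧
      (∀ j, G j ∣ (∑ i, lam₂ i * S i j - psi₂ j)) ∧
      (∀ i, (lam₂ i).degree < (N i : ℕ)) ∧
      (∀ j, (psi₂ j).degree < (T j : ℕ)) ∧
      LinearIndependent F ![(lam₁, psi₁), (lam₂, psi₂)] := by
  obtain ⟨sol, hsol, hsolves⟩ :=
    exists_linearIndependent_isHermitePadeSolution S hG N T (n := 2) (by omega)
  obtain ⟨hdvd₁, hlam₁, hpsi₁⟩ := hsolves 0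
  obtain ⟨hdvd₂, hlam₂, hpsi₂⟩ := hsolves 1
  refine ⟨(sol 0).1, (sol 0).2, (sol 1).1, (sol 1).2,
    hdvd₁, hlam₁, hpsi₁, hdvd₂, hlam₂, hpsi₂, ?_⟩
  convert hsol
  ext k : 1
  fin_cases k <;> rfl

/-- Lemma 4 of the paper: a simultaneous Hermite–Padé approximation problem with
`∑_i N_i > 1 + ∑_j (deg G_j - T_j)` has (at least) two `F`-linearly independent
nonzero solutions. -/
theorem hermite_pade_two_independent_solutions (F : Type*) [Field F] [Fintype F]
    (I J : Type*) [Fintype I] [Fintype J]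
    (S : I → J → Polynomial F) (G : J → Polynomial F) (hG : ∀ j, G j ≠ 0)
    (N : I → ℕ) (T : J → ℕ) (hT : ∀ j, T j ≤ (G j).natDegree)
    (hdim : ∑ i, N i > 1 + ∑ j, ((G j).natDegree - T j)) :
    ∃ (lam₁ : I → Polynomial F) (psi₁ : J → Polynomial F)
      (lam₂ : I → Polynomial F) (psi₂ : J → Polynomial F),
      (∀ j, G j ∣ (∑ i, lam₁ i * S i j - psi₁ j)) ∧
      (∀ i, (lam₁ i).degree < (N i : ℕ)) ∧
      (∀ j, (psi₁ j).degree < (T j : ℕ)) ∧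
      (∀ j, G j ∣ (∑ i, lam₂ i * S i j - psi₂ j)) ∧
      (∀ i, (lam₂ i).degree < (N i : ℕ)) ∧
      (∀ j, (psi₂ j).degree < (T j : ℕ)) ∧
      LinearIndependent F ![(lam₁, psi₁), (lam₂, psi₂)] :=
  hermite_pade_two_independent_solutions_general F I J S G hG N T hdim
end

section
/- Asymptotic decoding radius: fix integers n > k ≥ 2 and m ≥ 1, let γ := ((k-1)/n)^{1/(m+1)}, and for each positive integer i set ℓ_i := i and s_i := round(γ·i) + 1 (round to nearest integer). Define τ_new(ℓ,s) := n·[1 - (s·C(m+s-1,m) - m·C(m+s-1,m+1))/(s·C(m+ℓ,m))] - (m/(m+1))·(ℓ/s)·(k-1) - (1/s)·[1 - 1/C(m+ℓ,m)]. Then there exists a constant C > 0 (depending only on k/n and m) such that for all positive integers i, |τ_new(ℓ_i, s_i)/n - (1 - ((k-1)/n)^{m/(m+1)})| ≤ C/i. -/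
/-!
Pascal's rule turns the numerator `s·C(m+s-1,m) - m·C(m+s-1,m+1)` into `C(m+s,m+1)`, so the
main term of `τ_new(ℓ,s)/n` is `(1/(m+1)) ∏_{j<m} (s+1+j)/(ℓ+1+j)`. For `s = γℓ + 1 + O(1)`
every factor is `γ + O(1/ℓ)`, so the product is `γ^m + O(1/ℓ)`; the middle term is
`(m/(m+1))(ℓ/s)γ^{m+1} = (m/(m+1))γ^m + O(1/ℓ)` and the last one is `O(1/s) = O(1/ℓ)`.
Since `γ^m/(m+1) + mγ^m/(m+1) = γ^m`, what remains is `1 - γ^m + O(1/ℓ)`.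
-/

/-- The decoding radius `τ_new(ℓ,s)` of the Power-IRS decoder for code length `n`,
dimension `k`, interleaving degree `m` and decoder parameters `(ℓ, s)`. -/
noncomputable def tauNew (n k m ℓ s : ℕ) : ℝ :=
  (n : ℝ) * (1 - ((s : ℝ) * ((m + s - 1).choose m : ℝ) -
        (m : ℝ) * ((m + s - 1).choose (m + 1) : ℝ)) /
      ((s : ℝ) * ((m + ℓ).choose m : ℝ)))
    - ((m : ℝ) / ((m : ℝ) + 1)) * ((ℓ : ℝ) / (s : ℝ)) * ((k : ℝ) - 1)
    - (1 / (s : ℝ)) * (1 - 1 / ((m + ℓ).choose m : ℝ))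

open Finset

theorem Nat.cast_choose_mul_factorial {R : Type*} [CommSemiring R] (a b : ℕ) :
    ((a + b).choose b : R) * (b.factorial : R) = ∏ j ∈ range b, ((a : R) + 1 + j) := by
  have h := Nat.ascFactorial_eq_factorial_mul_choose a b
  rw [Nat.ascFactorial_eq_prod_range] at h
  rw [mul_comm, ← Nat.cast_mul, ← h]
  push_cast
  rfl

theorem Nat.cast_succ_mul_choose_sub_mul_choose_succ {R : Type*} [CommRing R] (m t : ℕ) :
    ((t : R) + 1) * (m + t).choose m - m * (m + t).choose (m + 1) = (m + t + 1).choose (m + 1) := by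
  have pascal := congrArg (Nat.cast : ℕ → R) (Nat.choose_succ_succ (m + t) m)
  have absorb := congrArg (Nat.cast : ℕ → R) (Nat.choose_succ_right_eq (m + t) m)
  rw [Nat.add_sub_cancel_left] at absorb
  push_cast at pascal absorb
  linear_combination -pascal - absorb

theorem cast_choose_succ_div_eq_prod (m t i : ℕ) :
    ((m + t + 1).choose (m + 1) : ℝ) / (((t : ℝ) + 1) * (m + i).choose m)
      = (∏ j ∈ range m, ((t : ℝ) + 1 + 1 + j) / ((i : ℝ) + 1 + j)) / (m + 1) := by
  have hnum := Nat.cast_choose_mul_factorial (R := ℝ) t (m + 1)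
  have hden := Nat.cast_choose_mul_factorial (R := ℝ) i m
  have hshift : ∏ j ∈ range m, ((t : ℝ) + 1 + ((j + 1 : ℕ) : ℝ))
      = ∏ j ∈ range m, ((t : ℝ) + 1 + 1 + j) := prod_congr rfl fun j _ => by push_cast; ring
  rw [prod_range_succ', hshift, show t + (m + 1) = m + t + 1 by ring, Nat.factorial_succ] at hnum
  rw [add_comm i] at hden
  push_cast at hnum
  have hchoose : (0 : ℝ) < (m + i).choose m := by exact_mod_cast Nat.choose_pos (by omega)
  rw [prod_div_distrib, div_div, div_eq_div_iff (by positivity) (by positivity)]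
  linear_combination (-((m + t + 1).choose (m + 1) * ((m : ℝ) + 1))) * hden +
      ((m + i).choose m : ℝ) * hnum

theorem tauNew_div_eq {n : ℕ} (hn : n ≠ 0) (k m i : ℕ) {s : ℕ} (hs : 0 < s) :
    tauNew n k m i s / n = 1 - (∏ j ∈ range m, ((s : ℝ) + 1 + j) / ((i : ℝ) + 1 + j)) / (m + 1)
      - m / (m + 1) * (i / s) * ((k - 1) / n) - 1 / (n * s) * (1 - 1 / (m + i).choose m) := by
  obtain ⟨t, rfl⟩ : ∃ t, s = t + 1 := ⟨s - 1, by omega⟩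
  unfold tauNew
  rw [show m + (t + 1) - 1 = m + t by omega]
  push_cast
  rw [Nat.cast_succ_mul_choose_sub_mul_choose_succ, cast_choose_succ_div_eq_prod]
  field_simp

theorem abs_prod_sub_pow_le {a δ : ℝ} (ha0 : 0 ≤ a) (ha1 : a ≤ 1) (x : ℕ → ℝ) (t : ℕ)
    (hx : ∀ j < t, |x j| ≤ 2) (hxa : ∀ j < t, |x j - a| ≤ δ) :
    |∏ j ∈ range t, x j - a ^ t| ≤ (2 ^ t - 1) * δ := by
  induction t with
  | zero => simp
  | succ t ih =>
    have ih := ih (fun j hj => hx j (by omega)) (fun j hj => hxa j (by omega))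
    have hxt := hx t (by omega)
    have hxat := hxa t (by omega)
    have hat : |a ^ t| ≤ 1 := by rw [abs_of_nonneg (by positivity)]; exact pow_le_one₀ ha0 ha1
    rw [prod_range_succ, pow_succ]
    calc |(∏ j ∈ range t, x j) * x t - a ^ t * a|
        = |(∏ j ∈ range t, x j - a ^ t) * x t + a ^ t * (x t - a)| := by ring_nf
      _ ≤ |∏ j ∈ range t, x j - a ^ t| * |x t| + |a ^ t| * |x t - a| := by
          rw [← abs_mul, ← abs_mul]; exact abs_add_le _ _
      _ ≤ (2 ^ t - 1) * δ * 2 + 1 * δ := by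
          gcongr
          exact (abs_nonneg _).trans ih
      _ = (2 ^ (t + 1) - 1) * δ := by ring

section ShiftedRatio

variable {γ i s j : ℝ}

theorem le_shifted_ratio (hγ1 : γ ≤ 1) (hi : 0 ≤ i) (hs : |s - (γ * i + 1)| ≤ 1 / 2)
    (hj : 0 ≤ j) : γ ≤ (s + 1 + j) / (i + 1 + j) := by
  rw [le_div_iff₀ (by positivity)]
  have := (abs_le.mp hs).1
  nlinarith

theorem shifted_ratio_nonneg (hγ0 : 0 ≤ γ) (hi : 0 ≤ i) (hs : |s - (γ * i + 1)| ≤ 1 / 2)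
    (hj : 0 ≤ j) : 0 ≤ (s + 1 + j) / (i + 1 + j) := by
  have := (abs_le.mp hs).1
  have : 0 ≤ γ * i := by positivity
  apply div_nonneg <;> linarith

theorem shifted_ratio_le_two (hγ1 : γ ≤ 1) (hi : 1 ≤ i) (hs : |s - (γ * i + 1)| ≤ 1 / 2)
    (hj : 0 ≤ j) : (s + 1 + j) / (i + 1 + j) ≤ 2 := by
  rw [div_le_iff₀ (by positivity)]
  have := (abs_le.mp hs).2
  nlinarith

theorem shifted_ratio_le (hγ0 : 0 ≤ γ) (hi : 0 < i) (hs : |s - (γ * i + 1)| ≤ 1 / 2)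
    (hj : 0 ≤ j) : (s + 1 + j) / (i + 1 + j) ≤ γ + (j + 3) / i := by
  rw [div_le_iff₀ (by positivity)]
  have := (abs_le.mp hs).2
  have h : j + 3 ≤ (j + 3) / i * (i + 1 + j) := by
    rw [div_mul_eq_mul_div, le_div_iff₀ hi]; nlinarith
  nlinarith

end ShiftedRatio

section Expansion

variable {γ i s : ℝ}

theorem abs_prod_shifted_ratio_sub_pow_le (hγ0 : 0 ≤ γ) (hγ1 : γ ≤ 1) (hi : 1 ≤ i)
    (hs : |s - (γ * i + 1)| ≤ 1 / 2) (m : ℕ) :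
    |∏ j ∈ range m, (s + 1 + j) / (i + 1 + j) - γ ^ m| ≤ (2 ^ m - 1) * ((m + 3) / i) := by
  refine abs_prod_sub_pow_le hγ0 hγ1 _ m (fun j _ => ?_) (fun j hj => ?_)
  · rw [abs_of_nonneg (shifted_ratio_nonneg hγ0 (by linarith) hs j.cast_nonneg)]
    exact shifted_ratio_le_two hγ1 hi hs j.cast_nonneg
  · have hjm : (j : ℝ) ≤ m := by exact_mod_cast hj.le
    rw [abs_of_nonneg (sub_nonneg.mpr (le_shifted_ratio hγ1 (by linarith) hs j.cast_nonneg))]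
    have := shifted_ratio_le hγ0 (by linarith) hs j.cast_nonneg
    have : ((j : ℝ) + 3) / i ≤ (m + 3) / i := by gcongr
    linarith

theorem abs_div_mul_pow_succ_sub_pow_le (hγ0 : 0 < γ) (hγ1 : γ ≤ 1) (hi : 0 < i)
    (hs : |s - (γ * i + 1)| ≤ 1 / 2) (m : ℕ) :
    |i / s * γ ^ (m + 1) - γ ^ m| ≤ 3 / 2 / (γ * i) := by
  have hγi : 0 < γ * i := by positivity
  have hsγi : γ * i ≤ s := by linarith [(abs_le.mp hs).1]
  have hdev : |i * γ - s| ≤ 3 / 2 := by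
    rw [abs_le]; constructor <;> linarith [abs_le.mp hs]
  have hpow : |γ ^ m| ≤ 1 := by
    rw [abs_of_nonneg (by positivity)]; exact pow_le_one₀ hγ0.le hγ1
  have hs0 : 0 < s := hγi.trans_le hsγi
  calc |i / s * γ ^ (m + 1) - γ ^ m| = |γ ^ m| * |i * γ - s| / s := by
        rw [← abs_mul, ← abs_of_pos hs0, ← abs_div, abs_of_pos hs0]
        congr 1
        field_simp
        ring
    _ ≤ 1 * (3 / 2) / (γ * i) := by gcongr
    _ = 3 / 2 / (γ * i) := by ring

theorem abs_radius_expansion_sub_le (hγ0 : 0 < γ) (hγ1 : γ ≤ 1) (hi : 1 ≤ i)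
    (hs : |s - (γ * i + 1)| ≤ 1 / 2) (m : ℕ) {n c : ℝ} (hn : 1 ≤ n) (hc : 1 ≤ c) :
    |1 - (∏ j ∈ range m, (s + 1 + j) / (i + 1 + j)) / (m + 1)
        - m / (m + 1) * (i / s) * γ ^ (m + 1) - 1 / (n * s) * (1 - 1 / c) - (1 - γ ^ m)|
      ≤ (2 ^ m * (m + 3) + 5 / (2 * γ)) / i := by
  have hγi : 0 < γ * i := by positivity
  have hsγi : γ * i ≤ s := by linarith [(abs_le.mp hs).1]
  have hprod := abs_prod_shifted_ratio_sub_pow_le hγ0.le hγ1 hi hs m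
  have hratio := abs_div_mul_pow_succ_sub_pow_le hγ0 hγ1 (by linarith) hs m
  have hweight : |(m : ℝ) / (m + 1)| ≤ 1 := by
    rw [abs_of_nonneg (by positivity), div_le_one (by positivity)]; linarith
  have hrem : |1 / (n * s) * (1 - 1 / c)| ≤ 1 / (γ * i) := by
    have hns : γ * i ≤ n * s := by nlinarith
    have hc0 : 0 ≤ 1 - 1 / c := by rw [sub_nonneg, div_le_one (by linarith)]; exact hc
    have hc1 : 1 - 1 / c ≤ 1 := sub_le_self _ (by positivity)
    have hns0 : 0 ≤ 1 / (n * s) := one_div_nonneg.mpr (hγi.trans_le hns).le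
    rw [abs_of_nonneg (mul_nonneg hns0 hc0)]
    calc 1 / (n * s) * (1 - 1 / c) ≤ 1 / (n * s) := mul_le_of_le_one_right hns0 hc1
      _ ≤ 1 / (γ * i) := by gcongr
  calc _ = |-((∏ j ∈ range m, (s + 1 + j) / (i + 1 + j) - γ ^ m) / (m + 1))
          - m / (m + 1) * (i / s * γ ^ (m + 1) - γ ^ m) - 1 / (n * s) * (1 - 1 / c)| := by
        congr 1; field_simp; ring
    _ ≤ |∏ j ∈ range m, (s + 1 + j) / (i + 1 + j) - γ ^ m| / (m + 1)
          + |(m : ℝ) / (m + 1)| * |i / s * γ ^ (m + 1) - γ ^ m|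
          + |1 / (n * s) * (1 - 1 / c)| := by
        refine (abs_sub _ _).trans ?_
        gcongr
        refine (abs_sub _ _).trans ?_
        rw [abs_neg, abs_div, abs_mul, abs_of_pos (by positivity : (0 : ℝ) < m + 1)]
    _ ≤ (2 ^ m - 1) * ((m + 3) / i) / 1 + 1 * (3 / 2 / (γ * i)) + 1 / (γ * i) := by
        have := (abs_nonneg _).trans hprod
        gcongr
        linarith
    _ ≤ (2 ^ m * (m + 3) + 5 / (2 * γ)) / i := by
        have hsplit : (2 ^ m * (m + 3) + 5 / (2 * γ)) / i
            = (2 ^ m - 1) * ((m + 3) / i) + 3 / 2 / (γ * i) + 1 / (γ * i) + (m + 3) / i := by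
          field_simp; ring
        have : 0 ≤ ((m : ℝ) + 3) / i := by positivity
        rw [hsplit, div_one, one_mul]
        linarith

end Expansion

theorem Real.rpow_one_div_succ_pow {x : ℝ} (hx : 0 ≤ x) (m : ℕ) :
    (x ^ (1 / ((m : ℝ) + 1))) ^ (m + 1) = x := by
  rw [← Real.rpow_mul_natCast hx, Nat.cast_succ, one_div_mul_cancel (by positivity), Real.rpow_one]

theorem Real.rpow_div_succ_eq_pow {x : ℝ} (hx : 0 ≤ x) (m : ℕ) :
    x ^ ((m : ℝ) / ((m : ℝ) + 1)) = (x ^ (1 / ((m : ℝ) + 1))) ^ m := by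
  rw [← Real.rpow_mul_natCast hx, one_div_mul_eq_div]

theorem asymptotic_decoding_radius_general (n k m : ℕ) (hk : 2 ≤ k) (hkn : k < n) :
    ∃ C : ℝ, 0 < C ∧ ∀ i : ℕ, 0 < i → ∀ s : ℕ,
      (s : ℤ) = round ((((k : ℝ) - 1) / (n : ℝ)) ^ ((1 : ℝ) / ((m : ℝ) + 1)) * (i : ℝ)) + 1 →
      |tauNew n k m i s / (n : ℝ) -
          (1 - (((k : ℝ) - 1) / (n : ℝ)) ^ ((m : ℝ) / ((m : ℝ) + 1)))| ≤ C / (i : ℝ) := by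
  have hk' : (2 : ℝ) ≤ k := by exact_mod_cast hk
  have hkn' : (k : ℝ) < n := by exact_mod_cast hkn
  have hr0 : 0 < ((k : ℝ) - 1) / n := div_pos (by linarith) (by linarith)
  have hr1 : ((k : ℝ) - 1) / n ≤ 1 := (div_le_one (by linarith)).mpr (by linarith)
  obtain ⟨γ, hγ⟩ : ∃ γ : ℝ, (((k : ℝ) - 1) / n) ^ (1 / ((m : ℝ) + 1)) = γ := ⟨_, rfl⟩
  have hγ0 : 0 < γ := hγ ▸ Real.rpow_pos_of_pos hr0 _
  have hγ1 : γ ≤ 1 := hγ ▸ Real.rpow_le_one hr0.le hr1 (by positivity)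
  have hγpow : γ ^ (m + 1) = ((k : ℝ) - 1) / n := hγ ▸ Real.rpow_one_div_succ_pow hr0.le m
  rw [hγ]
  refine ⟨2 ^ m * (m + 3) + 5 / (2 * γ), by positivity, fun i hi s hs => ?_⟩
  have hsγ : |(s : ℝ) - (γ * i + 1)| ≤ 1 / 2 := by
    rw [show (s : ℝ) = round (γ * i) + 1 by exact_mod_cast hs, add_sub_add_right_eq_sub,
      abs_sub_comm]
    exact abs_sub_round _
  have hs0 : 0 < s := by
    have : 0 ≤ γ * i := by positivity
    have : (0 : ℝ) < s := by linarith [(abs_le.mp hsγ).1]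
    exact_mod_cast this
  have hchoose : (1 : ℝ) ≤ (m + i).choose m := by exact_mod_cast Nat.choose_pos (by omega)
  rw [tauNew_div_eq (by omega) k m i hs0, Real.rpow_div_succ_eq_pow hr0.le, hγ, ← hγpow]
  exact abs_radius_expansion_sub_le hγ0 hγ1 (by exact_mod_cast hi) hsγ m (by linarith) hchoose

/-- Theorem 3 of the paper (asymptotic decoding radius): with `γ = ((k-1)/n)^{1/(m+1)}`
and parameter choice `(ℓ_i, s_i) = (i, round(γ·i) + 1)`, one has
`τ_new(ℓ_i, s_i)/n = 1 - ((k-1)/n)^{m/(m+1)} + O(1/i)`. -/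
theorem asymptotic_decoding_radius (n k m : ℕ) (hk : 2 ≤ k) (hkn : k < n) (hm : 1 ≤ m) :
    ∃ C : ℝ, 0 < C ∧ ∀ i : ℕ, 0 < i → ∀ s : ℕ,
      (s : ℤ) = round ((((k : ℝ) - 1) / (n : ℝ)) ^ ((1 : ℝ) / ((m : ℝ) + 1)) * (i : ℝ)) + 1 →
      |tauNew n k m i s / (n : ℝ) -
          (1 - (((k : ℝ) - 1) / (n : ℝ)) ^ ((m : ℝ) / ((m : ℝ) + 1)))| ≤ C / (i : ℝ) :=
  asymptotic_decoding_radius_general n k m hk hkn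
end

section
/- Binomial ratio convergence: let m be a positive integer and γ ∈ (0,1) a real number. Then there exists a constant C > 0 (depending on γ and m) such that for all positive integers i, |C(m + round(γ·i), m)/C(m + i, m) - γ^m| ≤ C/i. In particular, the ratio C(m+round(γi),m)/C(m+i,m) tends to γ^m as i → ∞. -/
open Finset Nat

lemma asc_prod (n : ℕ) : ∀ k : ℕ, n.ascFactorial k = ∏ j ∈ Finset.range k, (n + j)
  | 0 => by simp
  | k + 1 => by rw [Nat.ascFactorial_succ, Finset.prod_range_succ, asc_prod n k, Nat.mul_comm]

lemma choose_real (m k : ℕ) :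
    ((m + k).choose m : ℝ) = (∏ j ∈ Finset.range m, ((k : ℝ) + 1 + j)) / (m ! : ℝ) := by
  have h := Nat.ascFactorial_eq_factorial_mul_choose k m
  rw [asc_prod] at h
  have h2 : ((k + 1).ascFactorial m : ℝ) = (m ! : ℝ) * ((k + m).choose m : ℝ) := by
    rw [asc_prod]; exact_mod_cast congrArg (Nat.cast : ℕ → ℝ) h
  rw [asc_prod] at h2
  push_cast at h2
  have hm : (m ! : ℝ) ≠ 0 := by exact_mod_cast m.factorial_ne_zero
  rw [Nat.add_comm m k, eq_div_iff hm, mul_comm (((k + m).choose m : ℕ) : ℝ)]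
  exact h2.symm

lemma prod_diff_bound (a b : ℕ → ℝ) (M ε : ℝ) (hM : 1 ≤ M) (hε : 0 ≤ ε) :
    ∀ n : ℕ, (∀ j < n, |a j| ≤ M) → (∀ j < n, |b j| ≤ M) → (∀ j < n, |a j - b j| ≤ ε) →
    |(∏ j ∈ Finset.range n, a j) - ∏ j ∈ Finset.range n, b j| ≤ n * ε * M ^ n
  | 0, _, _, _ => by simp
  | n + 1, ha, hb, hab => by
    have hM0 : (0:ℝ) ≤ M := le_trans zero_le_one hM
    have ih := prod_diff_bound a b M ε hM hε n (fun j hj => ha j (hj.trans (Nat.lt_succ_self n)))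
      (fun j hj => hb j (hj.trans (Nat.lt_succ_self n)))
      (fun j hj => hab j (hj.trans (Nat.lt_succ_self n)))
    have hbn : |∏ j ∈ Finset.range n, b j| ≤ M ^ n := by
      rw [Finset.abs_prod]
      calc ∏ j ∈ Finset.range n, |b j| ≤ ∏ _j ∈ Finset.range n, M :=
            Finset.prod_le_prod (fun j _ => abs_nonneg _)
              (fun j hj => hb j ((Finset.mem_range.mp hj).trans (Nat.lt_succ_self n)))
        _ = M ^ n := by simp
    rw [Finset.prod_range_succ, Finset.prod_range_succ]
    have key : (∏ j ∈ Finset.range n, a j) * a n - (∏ j ∈ Finset.range n, b j) * b n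
        = a n * ((∏ j ∈ Finset.range n, a j) - ∏ j ∈ Finset.range n, b j)
          + (a n - b n) * ∏ j ∈ Finset.range n, b j := by ring
    rw [key]
    calc |a n * ((∏ j ∈ Finset.range n, a j) - ∏ j ∈ Finset.range n, b j)
          + (a n - b n) * ∏ j ∈ Finset.range n, b j|
        ≤ |a n| * |(∏ j ∈ Finset.range n, a j) - ∏ j ∈ Finset.range n, b j|
          + |a n - b n| * |∏ j ∈ Finset.range n, b j| := by
          refine (abs_add_le _ _).trans ?_; rw [abs_mul, abs_mul]
      _ ≤ M * (n * ε * M ^ n) + ε * M ^ n := by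
          refine add_le_add ?_ ?_
          · exact mul_le_mul (ha n (Nat.lt_succ_self n)) ih (abs_nonneg _) hM0
          · exact mul_le_mul (hab n (Nat.lt_succ_self n)) hbn (abs_nonneg _) hε
      _ ≤ (↑(n + 1)) * ε * M ^ (n + 1) := by
          push_cast
          have h1 : ε * M ^ n ≤ ε * M ^ (n+1) :=
            mul_le_mul_of_nonneg_left (pow_le_pow_right₀ hM (Nat.le_succ n)) hε
          have h3 : M * ((n:ℝ) * ε * M ^ n) = (n:ℝ) * ε * M ^ (n+1) := by ring
          linarith

/-- Lemma 5 of the paper (binomial ratio convergence): for fixed `m ∈ ℤ_{>0}` and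
`γ ∈ (0,1)`, `C(m + round(γ·i), m) / C(m + i, m) = γ^m + O(1/i)` as `i → ∞`. -/
theorem binomial_ratio_convergence (m : ℕ) (hm : 0 < m) (γ : ℝ) (hγ0 : 0 < γ)
    (hγ1 : γ < 1) :
    ∃ C : ℝ, 0 < C ∧ ∀ i : ℕ, 0 < i →
      |((m + (round (γ * (i : ℝ))).toNat).choose m : ℝ) / (((m + i).choose m : ℕ) : ℝ) -
          γ ^ m| ≤ C / (i : ℝ) := by
  refine ⟨m * (2 * m) * (2 * m + 1) ^ m, by positivity, ?_⟩
  intro i hi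
  set k : ℕ := (round (γ * (i : ℝ))).toNat with hkdef
  have hi0 : (0:ℝ) < i := by exact_mod_cast hi
  have hround : (0:ℤ) ≤ round (γ * (i : ℝ)) := by
    have : (0:ℝ) ≤ γ * i := by positivity
    rw [round_eq]
    exact Int.floor_nonneg.mpr (by linarith)
  have hkr : (k : ℝ) = round (γ * (i : ℝ)) := by
    rw [hkdef]; exact_mod_cast Int.toNat_of_nonneg hround
  have hkγ : |(k : ℝ) - γ * i| ≤ 1 / 2 := by
    rw [hkr, abs_sub_comm]; exact abs_sub_round _
  -- rewrite the ratio as a product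
  have hmfac : (0:ℝ) < (m ! : ℝ) := by exact_mod_cast m.factorial_pos
  have hdenpos : ∀ j : ℕ, (0:ℝ) < (i : ℝ) + 1 + j := fun j => by positivity
  have hratio : ((m + k).choose m : ℝ) / ((m + i).choose m : ℝ)
      = ∏ j ∈ Finset.range m, (((k : ℝ) + 1 + j) / ((i : ℝ) + 1 + j)) := by
    rw [choose_real m k, choose_real m i, Finset.prod_div_distrib]
    rw [div_div_div_comm, div_self hmfac.ne', div_one]
  rw [hratio]
  -- per-factor bounds
  set a : ℕ → ℝ := fun j => ((k : ℝ) + 1 + j) / ((i : ℝ) + 1 + j) with hadef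
  have hfac : ∀ j < m, |a j - γ| ≤ 2 * m / i := by
    intro j hj
    have hj1 : (j : ℝ) + 1 ≤ m := by exact_mod_cast hj
    have hd : (0:ℝ) < (i : ℝ) + 1 + j := hdenpos j
    have heq : a j - γ = (((k : ℝ) - γ * i) + (1 + j) * (1 - γ)) / ((i : ℝ) + 1 + j) := by
      rw [hadef]; field_simp; ring
    rw [heq, abs_div, abs_of_pos hd, div_le_div_iff₀ hd hi0]
    have hnum : |((k : ℝ) - γ * i) + (1 + j) * (1 - γ)| ≤ 1 / 2 + (1 + j) := by
      refine (abs_add_le _ _).trans ?_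
      have : |(1 + (j:ℝ)) * (1 - γ)| ≤ 1 + j := by
        rw [abs_mul, abs_of_pos (by positivity), abs_of_pos (by linarith)]
        nlinarith
      linarith
    have hib : (i:ℝ) ≤ (i : ℝ) + 1 + j := by linarith [Nat.cast_nonneg (α := ℝ) j]
    calc |((k : ℝ) - γ * i) + (1 + j) * (1 - γ)| * i
        ≤ (1/2 + (1 + j)) * i := mul_le_mul_of_nonneg_right hnum hi0.le
      _ ≤ (2 * m) * i := mul_le_mul_of_nonneg_right (by linarith) hi0.le
      _ ≤ 2 * m * ((i:ℝ) + 1 + j) := by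
          have hm0 : (0:ℝ) ≤ 2 * m := by positivity
          have : (0:ℝ) ≤ (j:ℝ) := Nat.cast_nonneg j
          nlinarith
  have hM : ∀ j < m, |a j| ≤ 2 * m + 1 := by
    intro j hj
    have := hfac j hj
    have h2 : 2 * (m:ℝ) / i ≤ 2 * m := by
      rw [div_le_iff₀ hi0]
      nlinarith [(show (1:ℝ) ≤ i by exact_mod_cast hi), (show (0:ℝ) ≤ 2*(m:ℝ) by positivity)]
    calc |a j| ≤ |a j - γ| + |γ| := by
          have := abs_add_le (a j - γ) γ; simpa using this
      _ ≤ 2 * m / i + 1 := by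
          rw [abs_of_pos hγ0]; linarith
      _ ≤ 2 * m + 1 := by linarith
  have hm1 : (1:ℝ) ≤ m := by exact_mod_cast hm
  have hMγ : ∀ j < m, |γ| ≤ 2 * (m:ℝ) + 1 := by
    intro j hj
    rw [abs_of_pos hγ0]
    linarith
  have hγm : γ ^ m = ∏ j ∈ Finset.range m, γ := by simp
  rw [hγm]
  have hb := prod_diff_bound a (fun _ => γ) (2 * m + 1) (2 * m / i)
    (by linarith) (by positivity) m hM hMγ hfac
  refine hb.trans ?_
  rw [div_eq_mul_inv, div_eq_mul_inv]
  ring_nf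
  nlinarith [pow_nonneg (show (0:ℝ) ≤ 2*(m:ℝ)+1 by positivity) m, inv_nonneg.mpr hi0.le,
    mul_pos (mul_pos (show (0:ℝ) < m by exact_mod_cast hm) (show (0:ℝ) < 2*(m:ℝ) by positivity)) (pow_pos (show (0:ℝ) < 2*(m:ℝ)+1 by positivity) m)]
end
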